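/- arXiv:2410.21592 — 4 statements merged into one kernel-verified Lean document; each statement's English description precedes it below -/
import Mathlib

section
/- Let F and G be functors between module categories such that F is left adjoint to G, and suppose for a module N there is a natural isomorphism G(F(N)) ≅ ⊕_{g ∈ G} N^g (a possibly infinite direct sum indexed by a group acting on modules). If M is a finitely generated module, then Hom(F(M), F(N)) ≅ ⊕_{g ∈ G} Hom(M, N^g). -/
/-!
The adjunction identifies `Hom(F M, F N)` additively with `Hom(M, Gf (F N)) ≅ Hom(M, ⨁ g, N^g)`.
A map from a finitely generated module into a direct sum sends a finite generating set into
finitely many summands, hence factors through a finite subsum, so `Hom(M, -)` commutes with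
the direct sum.
-/

open CategoryTheory DirectSum

namespace DirectSum

variable {R : Type*} [Semiring R] {M : Type*} [AddCommMonoid M] [Module R M]
  {ι : Type*} [DecidableEq ι] {A : ι → Type*} [∀ i, AddCommMonoid (A i)] [∀ i, Module R (A i)]

def linearMapOfComponents : (⨁ i, M →ₗ[R] A i) →+ (M →ₗ[R] ⨁ i, A i) :=
  toAddMonoid fun i => (LinearMap.compRight ℕ (lof R ι A i)).toAddMonoidHom

@[simp]
lemma linearMapOfComponents_of (i : ι) (f : M →ₗ[R] A i) :
    linearMapOfComponents (of _ i f) = (lof R ι A i).comp f :=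
  toAddMonoid_of _ _ _

lemma linearMapOfComponents_apply_apply (x : ⨁ i, M →ₗ[R] A i) (m : M) (i : ι) :
    linearMapOfComponents x m i = x i m := by
  induction x using DirectSum.induction_on with
  | zero => simp
  | of j f =>
    rcases eq_or_ne j i with rfl | hji
    · simp [lof_eq_of]
    · simp [lof_eq_of, of_eq_of_ne _ _ _ hji.symm]
  | add x y hx hy => simp [hx, hy]

lemma linearMapOfComponents_injective :
    Function.Injective (linearMapOfComponents (R := R) (M := M) (A := A)) := fun x y hxy =>
  DFinsupp.ext fun i => LinearMap.ext fun m => by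
    simpa only [linearMapOfComponents_apply_apply] using congr($hxy m i)

lemma sum_of_apply_of_support_subset {T : Finset ι} (x : ⨁ i, A i)
    [∀ i (a : A i), Decidable (a ≠ 0)] (hx : x.support ⊆ T) :
    ∑ i ∈ T, of A i (x i) = x := by
  rw [← Finset.sum_subset hx fun i _ hi => by simp [DFinsupp.notMem_support_iff.mp hi]]
  exact sum_support_of x

lemma linearMapOfComponents_surjective [Module.Finite R M] :
    Function.Surjective (linearMapOfComponents (R := R) (M := M) (A := A)) := by
  classical
  intro f
  obtain ⟨s, hs⟩ := Module.Finite.fg_top (R := R) (M := M)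
  let T := s.sup fun m => (f m).support
  refine ⟨∑ i ∈ T, of _ i ((component R ι A i).comp f), ?_⟩
  refine LinearMap.ext_on hs fun m hm => ?_
  simp only [map_sum, linearMapOfComponents_of, LinearMap.sum_apply, LinearMap.comp_apply,
    lof_eq_of, ← apply_eq_component]
  exact sum_of_apply_of_support_subset (f m) (Finset.le_sup (f := fun m => (f m).support) hm)

noncomputable def linearMapAddEquivOfFinite [Module.Finite R M] :
    (M →ₗ[R] ⨁ i, A i) ≃+ ⨁ i, M →ₗ[R] A i :=
  (AddEquiv.ofBijective linearMapOfComponents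
    ⟨linearMapOfComponents_injective, linearMapOfComponents_surjective⟩).symm

end DirectSum

noncomputable def ModuleCat.homDirectSumAddEquiv {R : Type*} [Ring R] {ι : Type*} [DecidableEq ι]
    (M : ModuleCat R) [Module.Finite R M] (A : ι → ModuleCat R) :
    (M ⟶ ModuleCat.of R (⨁ i, A i)) ≃+ ⨁ i, (M ⟶ A i) :=
  homAddEquiv.trans <| linearMapAddEquivOfFinite.trans <|
    DFinsupp.mapRange.addEquiv fun _ => homAddEquiv.symm

theorem hom_pushdown_iso_directSum_hom_general
    (R S : Type) [Ring R] [Ring S]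
    (F : ModuleCat.{0} R ⥤ ModuleCat.{0} S) (Gf : ModuleCat.{0} S ⥤ ModuleCat.{0} R)
    [F.Additive] (adj : F ⊣ Gf)
    (G₀ : Type) [DecidableEq G₀]
    (act : G₀ → ModuleCat.{0} R → ModuleCat.{0} R)
    (M N : ModuleCat.{0} R)
    (hM : Module.Finite R M)
    (hGFN : Nonempty (Gf.obj (F.obj N) ≅ ModuleCat.of R (⨁ g : G₀, (act g N : Type)))) :
    Nonempty ((F.obj M ⟶ F.obj N) ≃+ ⨁ g : G₀, (M ⟶ act g N)) := by
  obtain ⟨e⟩ := hGFN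
  exact ⟨(adj.homAddEquiv M (F.obj N)).trans <|
    ((preadditiveCoyoneda.obj (Opposite.op M)).mapIso e).addCommGroupIsoToAddEquiv.trans <|
      ModuleCat.homDirectSumAddEquiv M fun g => act g N⟩

/-- Let `F : R-Mod → S-Mod` be an additive functor which is left adjoint
to `Gf : S-Mod → R-Mod`, let `G₀` be a group acting on `R`-modules by `act`, and suppose
that for the module `N` there is an isomorphism `Gf(F(N)) ≅ ⊕_{g ∈ G₀} N^g`.  If `M` is a
finitely generated module, then `Hom(F(M), F(N)) ≅ ⊕_{g ∈ G₀} Hom(M, N^g)`. -/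
theorem hom_pushdown_iso_directSum_hom
    (R S : Type) [Ring R] [Ring S]
    (F : ModuleCat.{0} R ⥤ ModuleCat.{0} S) (Gf : ModuleCat.{0} S ⥤ ModuleCat.{0} R)
    [F.Additive] (adj : F ⊣ Gf)
    (G₀ : Type) [Group G₀] [DecidableEq G₀]
    (act : G₀ → ModuleCat.{0} R → ModuleCat.{0} R)
    (M N : ModuleCat.{0} R)
    (hM : Module.Finite R M)
    (hGFN : Nonempty (Gf.obj (F.obj N) ≅ ModuleCat.of R (⨁ g : G₀, (act g N : Type)))) :
    Nonempty ((F.obj M ⟶ F.obj N) ≃+ ⨁ g : G₀, (M ⟶ act g N)) :=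
  hom_pushdown_iso_directSum_hom_general R S F Gf adj G₀ act M N hM hGFN
end

section
/- In a Krull–Schmidt category, a morphism f : V → W is left minimal if and only if whenever f is isomorphic to a morphism V → W₁ ⊕ W₂ whose second component is zero, then W₂ = 0. -/
open CategoryTheory CategoryTheory.Limits

section Rad
variable {C : Type*} [Category C] [Preadditive C]

/-- the "radical" predicate on morphisms -/
def MyRad {X Y : C} (h : X ⟶ Y) : Prop := ∀ g : Y ⟶ X, IsIso (𝟙 X - h ≫ g)

lemma isIso_one_sub_swap {X Z : C} (a : Z ⟶ X) (b : X ⟶ Z) (hba : IsIso (𝟙 X - b ≫ a)) :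
    IsIso (𝟙 Z - a ≫ b) := by
  set u : X ⟶ X := inv (𝟙 X - b ≫ a) with hu
  have h1 : (𝟙 X - b ≫ a) ≫ u = 𝟙 X := IsIso.hom_inv_id _
  have h2 : u ≫ (𝟙 X - b ≫ a) = 𝟙 X := IsIso.inv_hom_id _
  refine ⟨𝟙 Z + a ≫ u ≫ b, ?_, ?_⟩
  · have : (𝟙 Z - a ≫ b) ≫ (𝟙 Z + a ≫ u ≫ b)
        = 𝟙 Z - a ≫ b + a ≫ (((𝟙 X - b ≫ a) ≫ u) ≫ b) := by
      simp only [Preadditive.sub_comp, Preadditive.comp_add, Preadditive.add_comp,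
        Preadditive.comp_sub, Preadditive.sub_comp, Category.id_comp, Category.comp_id,
        Category.assoc]
    rw [this, h1]
    simp
  · have : (𝟙 Z + a ≫ u ≫ b) ≫ (𝟙 Z - a ≫ b)
        = 𝟙 Z - a ≫ b + a ≫ ((u ≫ (𝟙 X - b ≫ a)) ≫ b) := by
      simp only [Preadditive.sub_comp, Preadditive.comp_add, Preadditive.add_comp,
        Preadditive.comp_sub, Category.id_comp, Category.comp_id, Category.assoc]
      abel
    rw [this, h2]
    simp

lemma myRad_comp {X Y Z : C} (h : X ⟶ Y) (k : Y ⟶ Z) (hh : MyRad h) : MyRad (h ≫ k) := by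
  intro g
  rw [Category.assoc]
  exact hh (k ≫ g)

lemma comp_myRad {X Y Z : C} (k : Z ⟶ X) (h : X ⟶ Y) (hh : MyRad h) : MyRad (k ≫ h) := by
  intro g
  have h1 : IsIso (𝟙 X - (h ≫ g) ≫ k) := by
    rw [Category.assoc]; exact hh (g ≫ k)
  have := isIso_one_sub_swap k (h ≫ g) h1
  rwa [← Category.assoc] at this

lemma myRad_zero {X Y : C} : MyRad (0 : X ⟶ Y) := by
  intro g; simp only [zero_comp, sub_zero]; infer_instance

lemma myRad_add {X Y : C} (h₁ h₂ : X ⟶ Y) (r1 : MyRad h₁) (r2 : MyRad h₂) :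
    MyRad (h₁ + h₂) := by
  intro g
  have ha : IsIso (𝟙 X - h₁ ≫ g) := r1 g
  set a : X ⟶ X := 𝟙 X - h₁ ≫ g with hadef
  have hb : IsIso (𝟙 X - inv a ≫ (h₂ ≫ g)) := by
    apply isIso_one_sub_swap
    have := r2 (g ≫ inv a)
    rwa [← Category.assoc] at this
  have key : 𝟙 X - (h₁ + h₂) ≫ g = a ≫ (𝟙 X - inv a ≫ (h₂ ≫ g)) := by
    rw [Preadditive.comp_sub, Category.comp_id, ← Category.assoc, IsIso.hom_inv_id,
      Category.id_comp, hadef, Preadditive.add_comp]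
    abel
  rw [key]
  infer_instance

lemma myRad_sum {X Y : C} {ι : Type*} (s : Finset ι) (F : ι → (X ⟶ Y))
    (h : ∀ i ∈ s, MyRad (F i)) : MyRad (∑ i ∈ s, F i) := by
  exact Finset.sum_induction F MyRad (fun a b ha hb => myRad_add a b ha hb) myRad_zero h

lemma myRad_isIso_one_sub {X : C} (h : X ⟶ X) (hr : MyRad h) : IsIso (𝟙 X - h) := by
  simpa using hr (𝟙 X)

/-- If `End X` is local and `h` is not radical, it has a right inverse. -/
lemma exists_right_inverse_of_not_myRad {X Y : C} (h : X ⟶ Y)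
    (hl : IsLocalRing (End X)) (hn : ¬ MyRad h) : ∃ g : Y ⟶ X, h ≫ g = 𝟙 X := by
  simp only [MyRad, not_forall] at hn
  obtain ⟨g, hg⟩ := hn
  have : IsUnit (show End X from h ≫ g) := by
    have hsum : (show End X from 𝟙 X - h ≫ g) + (show End X from h ≫ g) = 1 := by
      change (𝟙 X - h ≫ g) + (h ≫ g) = 𝟙 X
      abel
    rcases IsLocalRing.isUnit_or_isUnit_of_add_one hsum with h1 | h2
    · exact absurd ((isUnit_iff_isIso _).1 h1) hg
    · exact h2
  have hiso : IsIso (h ≫ g) := (isUnit_iff_isIso _).1 this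
  exact ⟨g ≫ inv (h ≫ g), by rw [← Category.assoc, IsIso.hom_inv_id]⟩

lemma myRad_of_isZero_src {X Y : C} (h : X ⟶ Y) (hz : IsZero X) : MyRad h := by
  intro g
  have : 𝟙 X - h ≫ g = 𝟙 X := hz.eq_of_src _ _
  rw [this]; infer_instance

end Rad


section Decomp
variable {C : Type*} [Category C] [Preadditive C] [HasFiniteBiproducts C] [HasBinaryBiproducts C]

/-- Splitting off one summand of a finite biproduct. -/
noncomputable def splitOffIso {n : ℕ} (Y : Fin n → C) (i : Fin n) :
    (⨁ Y) ≅ (⨁ Subtype.restrict (fun k => k ≠ i) Y) ⊞ Y i where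
  hom := biprod.lift (biproduct.toSubtype Y (fun k => k ≠ i)) (biproduct.π Y i)
  inv := biprod.desc (biproduct.fromSubtype Y (fun k => k ≠ i)) (biproduct.ι Y i)
  hom_inv_id := by
    rw [biprod.lift_desc, biproduct.toSubtype_fromSubtype]
    apply biproduct.hom_ext'
    intro k
    by_cases hk : k = i
    · subst hk
      simp [biproduct.ι_π]
    · simp [biproduct.ι_π, hk]
  inv_hom_id := by
    apply biprod.hom_ext'
    · rw [biprod.inl_desc_assoc]
      apply biprod.hom_ext
      · simp [biproduct.fromSubtype_toSubtype]
      · simp [biproduct.fromSubtype_π]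
    · rw [biprod.inr_desc_assoc]
      apply biprod.hom_ext
      · simp [biproduct.ι_toSubtype]
      · simp

@[simp] lemma splitOffIso_hom_snd {n : ℕ} (Y : Fin n → C) (i : Fin n) :
    (splitOffIso Y i).hom ≫ biprod.snd = biproduct.π Y i := by
  simp [splitOffIso]

end Decomp

/-- A morphism `f : V ⟶ W` is *left minimal* if every endomorphism `φ` of `W` with
`f ≫ φ = f` is an isomorphism. -/
def CategoryTheory.LeftMinimal {C : Type*} [Category C] {V W : C} (f : V ⟶ W) : Prop :=
  ∀ φ : W ⟶ W, f ≫ φ = f → IsIso φ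

/-- In a Krull–Schmidt category (an additive category in which every
object is a finite biproduct of objects with local endomorphism rings), a morphism
`f : V ⟶ W` is left minimal if and only if whenever `f` is isomorphic to a morphism
`V ⟶ W₁ ⊞ W₂` whose second component is zero, then `W₂ = 0`. -/
theorem leftMinimal_iff_no_zero_component
    {C : Type*} [Category C] [Preadditive C] [HasFiniteBiproducts C] [HasBinaryBiproducts C]
    (hKS : ∀ X : C, ∃ (n : ℕ) (Y : Fin n → C),
      Nonempty (X ≅ ⨁ Y) ∧ ∀ i, IsLocalRing (End (Y i)))
    {V W : C} (f : V ⟶ W) :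
    CategoryTheory.LeftMinimal f ↔
      ∀ (W₁ W₂ : C) (e : W ≅ W₁ ⊞ W₂),
        f ≫ e.hom ≫ biprod.snd = 0 → IsZero W₂ := by
  constructor
  · intro hmin W₁ W₂ e hf
    have hf' : f ≫ e.hom ≫ biprod.snd ≫ (biprod.inr : W₂ ⟶ W₁ ⊞ W₂) = 0 := by
      rw [show f ≫ e.hom ≫ biprod.snd ≫ (biprod.inr : W₂ ⟶ W₁ ⊞ W₂)
          = (f ≫ e.hom ≫ biprod.snd) ≫ biprod.inr by simp only [Category.assoc], hf, zero_comp]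
    have hfe : f ≫ e.hom = f ≫ e.hom ≫ biprod.fst ≫ biprod.inl := by
      conv_lhs => rw [← Category.comp_id (f ≫ e.hom), ← biprod.total]
      rw [Preadditive.comp_add]
      simp only [Category.assoc]
      rw [hf', add_zero]
    set φ : W ⟶ W := e.hom ≫ biprod.fst ≫ biprod.inl ≫ e.inv with hφ
    have hfφ : f ≫ φ = f := by
      rw [hφ]
      calc f ≫ e.hom ≫ biprod.fst ≫ biprod.inl ≫ e.inv
          = (f ≫ e.hom ≫ biprod.fst ≫ biprod.inl) ≫ e.inv := by simp only [Category.assoc]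
        _ = (f ≫ e.hom) ≫ e.inv := by
            rw [← hfe]
        _ = f := by simp
    have hiso : IsIso φ := hmin φ hfφ
    have hiso2 : IsIso (e.inv ≫ φ ≫ e.hom) := by infer_instance
    have h0 : biprod.inr ≫ (e.inv ≫ φ ≫ e.hom) = 0 := by
      rw [hφ]
      simp
    have hinr : (biprod.inr : W₂ ⟶ W₁ ⊞ W₂) = 0 := by
      calc (biprod.inr : W₂ ⟶ W₁ ⊞ W₂)
          = (biprod.inr ≫ (e.inv ≫ φ ≫ e.hom)) ≫ inv (e.inv ≫ φ ≫ e.hom) := by simp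
        _ = 0 := by rw [h0, zero_comp]
    rw [IsZero.iff_id_eq_zero]
    rw [← biprod.inr_snd (X := W₁) (Y := W₂), hinr, zero_comp]
  · intro H φ hφ
    obtain ⟨n, Y, ⟨ε⟩, hloc⟩ := hKS W
    set ψ : (⨁ Y) ⟶ (⨁ Y) := 𝟙 _ - ε.inv ≫ φ ≫ ε.hom with hψ
    have hgψ : (f ≫ ε.hom) ≫ ψ = 0 := by
      rw [hψ, Preadditive.comp_sub, Category.comp_id]
      have : (f ≫ ε.hom) ≫ ε.inv ≫ φ ≫ ε.hom = f ≫ φ ≫ ε.hom := by simp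
      rw [this, ← Category.assoc, hφ, sub_self]
    have key : ∀ i j, MyRad (biproduct.ι Y i ≫ ψ ≫ biproduct.π Y j) := by
      intro i j
      by_contra hc
      obtain ⟨g0, hg0⟩ := exists_right_inverse_of_not_myRad _ (hloc i) hc
      set p : (⨁ Y) ⟶ Y i := ψ ≫ biproduct.π Y j ≫ g0 with hp
      have hip : biproduct.ι Y i ≫ p = 𝟙 (Y i) := by
        rw [hp]
        rw [show biproduct.ι Y i ≫ ψ ≫ biproduct.π Y j ≫ g0
            = (biproduct.ι Y i ≫ ψ ≫ biproduct.π Y j) ≫ g0 by simp only [Category.assoc]]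
        exact hg0
      have hfp : (f ≫ ε.hom) ≫ p = 0 := by
        rw [hp, show (f ≫ ε.hom) ≫ ψ ≫ biproduct.π Y j ≫ g0
            = ((f ≫ ε.hom) ≫ ψ) ≫ biproduct.π Y j ≫ g0 by simp only [Category.assoc],
          hgψ, zero_comp]
      set d : (⨁ Y) ⟶ (⨁ Y) := (p - biproduct.π Y i) ≫ biproduct.ι Y i with hd
      have hid : biproduct.ι Y i ≫ d = 0 := by
        rw [hd, ← Category.assoc, Preadditive.comp_sub, hip, biproduct.ι_π_self, sub_self,
          zero_comp]
      have hdd : d ≫ d = 0 := by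
        rw [hd, Category.assoc, hid, comp_zero]
      have hddiso : IsIso (𝟙 (⨁ Y) + d) := by
        have h1 : (𝟙 (⨁ Y) + d) ≫ (𝟙 (⨁ Y) - d) = 𝟙 (⨁ Y) - d ≫ d := by
          simp only [Preadditive.comp_sub, Preadditive.add_comp, Category.id_comp,
            Category.comp_id]
          abel
        have h2 : (𝟙 (⨁ Y) - d) ≫ (𝟙 (⨁ Y) + d) = 𝟙 (⨁ Y) - d ≫ d := by
          simp only [Preadditive.comp_add, Preadditive.sub_comp, Category.id_comp,
            Category.comp_id]
          abel
        exact ⟨𝟙 (⨁ Y) - d, by rw [h1, hdd, sub_zero], by rw [h2, hdd, sub_zero]⟩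
      have hdπ : (𝟙 (⨁ Y) + d) ≫ biproduct.π Y i = p := by
        rw [Preadditive.add_comp, Category.id_comp, hd, Category.assoc, biproduct.ι_π_self,
          Category.comp_id]
        abel
      let e : W ≅ (⨁ Subtype.restrict (fun k => k ≠ i) Y) ⊞ Y i :=
        ε ≪≫ asIso (𝟙 (⨁ Y) + d) ≪≫ splitOffIso Y i
      have he : f ≫ e.hom ≫ biprod.snd = 0 := by
        show f ≫ (ε.hom ≫ (𝟙 (⨁ Y) + d) ≫ (splitOffIso Y i).hom) ≫ biprod.snd = 0
        rw [Category.assoc, Category.assoc, splitOffIso_hom_snd, hdπ]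
        rw [show f ≫ ε.hom ≫ p = (f ≫ ε.hom) ≫ p by simp only [Category.assoc], hfp]
      have hz := H _ _ e he
      exact hc (myRad_of_isZero_src _ hz)
    have hrad : MyRad ψ := by
      have hdecomp : ψ = ∑ i : Fin n, ∑ j : Fin n,
          biproduct.π Y i ≫ (biproduct.ι Y i ≫ ψ ≫ biproduct.π Y j) ≫ biproduct.ι Y j := by
        conv_lhs => rw [← Category.id_comp ψ, ← Category.comp_id ψ, ← biproduct.total]
        simp only [Preadditive.sum_comp, Preadditive.comp_sum, Category.assoc]
        rw [Finset.sum_comm]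
      rw [hdecomp]
      apply myRad_sum
      intro i _
      apply myRad_sum
      intro j _
      exact comp_myRad _ _ (myRad_comp _ _ (key i j))
    have hiso : IsIso (ε.inv ≫ φ ≫ ε.hom) := by
      have := myRad_isIso_one_sub ψ hrad
      rw [hψ] at this
      simpa using this
    have : φ = ε.hom ≫ (ε.inv ≫ φ ≫ ε.hom) ≫ ε.inv := by simp
    rw [this]
    infer_instance
end

section
/- Let F : B-mod → A-mod be an additive functor and U a B-module, and suppose a group G acts on B-mod with Hom(FM, FW) ≅ ⊕_{g∈G} Hom(M, W^g) naturally. If f : M → U' is a left add_G(U)-approximation of M (where add_G(U) is the smallest G-stable additive subcategory containing U), then Ff : FM → FU' is a left add(FU)-approximation of FM. -/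
open CategoryTheory CategoryTheory.Limits

/-- `X` belongs to `add_G(U)`: `X` is a direct summand of a finite biproduct of
`G`-translates of `U`. -/
def MemAddOrbit {R : Type} [Ring R] {G : Type}
    (act : G → ModuleCat.{0} R ⥤ ModuleCat.{0} R) (U X : ModuleCat.{0} R) : Prop :=
  ∃ (n : ℕ) (g : Fin n → G) (s : X ⟶ ⨁ fun i => (act (g i)).obj U)
    (r : (⨁ fun i => (act (g i)).obj U) ⟶ X), s ≫ r = 𝟙 X

/-- `Y` belongs to `add U'`: `Y` is a direct summand of a finite biproduct of copies of
`U'`. -/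
def MemAdd {S : Type} [Ring S] (U' Y : ModuleCat.{0} S) : Prop :=
  ∃ (n : ℕ) (s : Y ⟶ ⨁ fun _ : Fin n => U') (r : (⨁ fun _ : Fin n => U') ⟶ Y),
    s ≫ r = 𝟙 Y

/-- Let `F : B-mod → A-mod` be an additive functor, `G` a group acting
on `B-mod` with `F ∘ g ≅ F`, such that every morphism `F M ⟶ F W` decomposes as a finite
sum `Σ F(q_g)` with `q_g : M ⟶ W^g` (i.e. `Hom(F M, F W) ≅ ⊕_{g ∈ G} Hom(M, W^g)`).  If
`f : M ⟶ U'` is a left `add_G(U)`-approximation of `M`, then `F f : F M ⟶ F U'` is a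
left `add(F U)`-approximation of `F M`. -/
theorem pushdown_of_left_approximation_is_left_approximation
    (R S : Type) [Ring R] [Ring S]
    (F : ModuleCat.{0} R ⥤ ModuleCat.{0} S) [F.Additive]
    (G : Type) [Group G]
    (act : G → ModuleCat.{0} R ⥤ ModuleCat.{0} R)
    (e : ∀ g : G, (act g ⋙ F) ≅ F)
    (M U U' : ModuleCat.{0} R)
    (hhom : ∀ (W : ModuleCat.{0} R) (p : F.obj M ⟶ F.obj W),
      ∃ (n : ℕ) (g : Fin n → G) (q : ∀ i : Fin n, M ⟶ (act (g i)).obj W),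
        p = ∑ i : Fin n, (F.map (q i) ≫ (e (g i)).hom.app W))
    (f : M ⟶ U') (hU' : MemAddOrbit act U U')
    (happrox : ∀ X : ModuleCat.{0} R, MemAddOrbit act U X →
      ∀ p : M ⟶ X, ∃ h : U' ⟶ X, f ≫ h = p) :
    ∀ Y : ModuleCat.{0} S, MemAdd (F.obj U) Y →
      ∀ p : F.obj M ⟶ Y, ∃ h : F.obj U' ⟶ Y, F.map f ≫ h = p := by
  rintro Y ⟨n, s, r, hsr⟩ p
  have key : ∀ i : Fin n, ∃ k : F.obj U' ⟶ F.obj U,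
      F.map f ≫ k = p ≫ s ≫ biproduct.π _ i := by
    intro i
    obtain ⟨m, g, q, hq⟩ := hhom U (p ≫ s ≫ biproduct.π _ i)
    have hmem : ∀ j : Fin m, MemAddOrbit act U ((act (g j)).obj U) := by
      intro j
      exact ⟨1, fun _ => g j, biproduct.lift fun _ => 𝟙 _, biproduct.π _ 0, by simp⟩
    choose h hh using fun j => happrox _ (hmem j) (q j)
    refine ⟨∑ j, F.map (h j) ≫ (e (g j)).hom.app U, ?_⟩
    rw [hq]
    rw [Preadditive.comp_sum]
    exact Finset.sum_congr rfl fun j _ => by rw [← Category.assoc, ← F.map_comp, hh]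
  choose k hk using key
  refine ⟨biproduct.lift k ≫ r, ?_⟩
  have hlift : F.map f ≫ biproduct.lift k = p ≫ s := by
    apply biproduct.hom_ext
    intro i
    simp [hk]
  rw [← Category.assoc, hlift, Category.assoc, hsr, Category.comp_id]
end

section
/- Let G be a finitely generated free group with the chain of subgroups G = G₀ ⊇ G₁ ⊇ ⋯ defined by successively taking the normal closure of all free generators except one of minimal word length. Then for every positive integer r there exists a positive integer m such that the free generating set S_m of G_m contains no element of S-length smaller than r. -/
/-!
Write every element of `S i` in reduced form as `v t v⁻¹` with `t` a generator. The invariant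
`IsSeparated` says that no conjugator of an element of `S i` runs through the edge of the Cayley
tree leaving `v` with label `t^{±1}`. For `a = u s u⁻¹` and `x = v t v⁻¹` in such a set and
`j > 0`, it makes `u s^j (u⁻¹ v)` the reduced conjugator of `a^j x a^{-j}`, which is therefore
longer than `x`, and it passes the invariant on to `S (i + 1)`. Hence every element of `S (i + 1)`
of length at most `|a i|` is an element of `S i` other than `a i`; as there are only finitely many
words of bounded length, the minimal length `|a i|` cannot stay constant forever.
-/

open List

theorem List.exists_eq_append_append_of_head?_ne {β : Type*} (u v : List β) :
    ∃ p u' v', u = p ++ u' ∧ v = p ++ v' ∧ ∀ c ∈ u'.head?, c ∉ v'.head? := by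
  induction u generalizing v with
  | nil => exact ⟨[], [], v, rfl, rfl, by simp⟩
  | cons c u ih =>
    cases v with
    | nil => exact ⟨[], c :: u, [], rfl, rfl, by simp⟩
    | cons d v =>
      by_cases hcd : c = d
      · obtain ⟨p, u', v', rfl, rfl, h⟩ := ih v
        exact ⟨c :: p, u', v', rfl, by rw [hcd]; rfl, h⟩
      · exact ⟨[], c :: u, d :: v, rfl, rfl, by simpa [eq_comm] using hcd⟩

theorem List.IsPrefix.head?_eq {β : Type*} {l₁ l₂ : List β} (h : l₁ <+: l₂)
    (hl : l₁ ≠ []) : l₁.head? = l₂.head? := by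
  obtain ⟨r, rfl⟩ := h
  rw [head?_append_of_ne_nil _ hl]

def conjPowers {G : Type*} [Group G] (S : Set G) (a : G) : Set G :=
  {g | ∃ x ∈ S, x ≠ a ∧ ∃ j : ℕ, g = a ^ j * x * (a ^ j)⁻¹}

namespace FreeGroup

variable {α : Type*} {L e X Y p q u u' v v' w : List (α × Bool)} {t r : α}

theorem IsReduced.invRev (h : IsReduced L) : IsReduced (invRev L) := by
  rw [IsReduced, FreeGroup.invRev, isChain_reverse, isChain_map]
  exact h.imp fun c d hcd hdc => by simpa using (hcd hdc.symm).symm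

theorem not_isReduced_append_of_head?_eq (he : e ≠ []) (h : X.head? = (invRev e).head?) :
    ¬IsReduced (e ++ X) := by
  obtain ⟨e, c, rfl⟩ := (eq_nil_or_concat' e).resolve_left he
  obtain ⟨X, rfl⟩ : ∃ X', X = (c.1, !c.2) :: X' := by
    cases X <;> simp_all [FreeGroup.invRev]
  intro hr
  have := hr.infix (L₁ := [c, (c.1, !c.2)]) ⟨e, X, by simp⟩
  simp at this

theorem isReduced_invRev_append (hu : IsReduced u) (hv : IsReduced v)
    (h : ∀ c ∈ u.head?, c ∉ v.head?) : IsReduced (invRev u ++ v) := by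
  refine isChain_append.2 ⟨hu.invRev, hv, fun c hc d hd hcd => ?_⟩
  rw [FreeGroup.invRev, getLast?_reverse, head?_map] at hc
  obtain ⟨c, hc', rfl⟩ := Option.mem_map.1 hc
  by_contra hne
  exact h c hc' (by rwa [show c = d by ext <;> simp_all])

/-- `invRev u ++ X` walks from the vertex `p ++ u = q ++ u'` of the Cayley tree up to `p` and then
down along `X`, and similarly for `Y`; unless `p = q`, one of `p ++ X`, `q ++ Y` would have to
backtrack. -/
theorem prefix_append_of_invRev_append_prefix (hpq : p ++ u = q ++ u')
    (hX : IsReduced (p ++ X)) (hX₀ : X ≠ []) (hY : IsReduced (q ++ Y))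
    (h : invRev u ++ X <+: invRev u' ++ Y) : p ++ X <+: q ++ Y := by
  rcases append_eq_append_iff.1 hpq with ⟨e, rfl, rfl⟩ | ⟨e, rfl, rfl⟩
  · rw [invRev_append, append_assoc, prefix_append_right_inj] at h
    rcases eq_or_ne e [] with rfl | he
    · simpa using h
    · obtain ⟨r, rfl⟩ := h
      refine absurd (hY.infix (L₁ := e ++ (invRev e ++ X ++ r)) ⟨p, [], by simp⟩)
        (not_isReduced_append_of_head?_eq he ?_)
      rw [append_assoc, head?_append_of_ne_nil _ (by simpa [FreeGroup.invRev] using he)]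
  · rw [invRev_append, append_assoc, prefix_append_right_inj] at h
    rcases eq_or_ne e [] with rfl | he
    · simpa using h
    · obtain ⟨r, hr⟩ := h
      refine absurd (hX.infix (L₁ := e ++ X) ⟨q, [], by simp⟩)
        (not_isReduced_append_of_head?_eq he ?_)
      rw [← head?_append_of_ne_nil X hX₀ (l₂ := r), hr,
        head?_append_of_ne_nil _ (by simpa [FreeGroup.invRev] using he)]

def conjWord (v : List (α × Bool)) (t : α) : List (α × Bool) := v ++ (t, true) :: invRev v

theorem length_conjWord : (conjWord v t).length = 2 * v.length + 1 := by
  simp only [conjWord, length_append, length_cons, invRev_length]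
  omega

theorem conjWord_inj : conjWord v t = conjWord w r ↔ v = w ∧ t = r := by
  refine ⟨fun h => ?_, by rintro ⟨rfl, rfl⟩; rfl⟩
  have hlen : v.length = w.length := by
    have := congrArg length h
    simp only [length_conjWord] at this
    omega
  obtain ⟨rfl, h⟩ := append_inj h hlen
  exact ⟨rfl, congrArg Prod.fst (cons_eq_cons.1 h).1⟩

theorem isReduced_conjWord_iff : IsReduced (conjWord v t) ↔ ∀ b, IsReduced (v ++ [(t, b)]) := by
  have hinv : invRev (v ++ [(t, false)]) = [(t, true)] ++ invRev v := by
    simp [FreeGroup.invRev]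
  constructor
  · intro h b
    cases b
    · have := (h.infix (L₁ := [(t, true)] ++ invRev v) ⟨v, [], by simp [conjWord]⟩).invRev
      rwa [← hinv, invRev_invRev] at this
    · exact h.infix ⟨[], invRev v, by simp [conjWord]⟩
  · intro h
    have := IsReduced.append_overlap (h true) (hinv ▸ (h false).invRev) (cons_ne_nil _ _)
    simpa [conjWord] using this

theorem isReduced_append_replicate_append {Z : List (α × Bool)} {s : α} {c : α × Bool}
    {j : ℕ} (hj : j ≠ 0) (hu : IsReduced (u ++ [(s, true)])) (hZ : IsReduced (Z ++ [c]))
    (hZs : ∀ d ∈ (Z ++ [c]).head?, d.1 ≠ s) :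
    IsReduced (u ++ replicate j (s, true) ++ (Z ++ [c])) := by
  have hsZ : IsReduced ([(s, true)] ++ (Z ++ [c])) :=
    isChain_cons.2 ⟨fun d hd hsd => absurd hsd.symm (hZs d hd), hZ⟩
  have := (hu.append_overlap hsZ (cons_ne_nil _ _)).append_flatten_replicate_append
    IsCyclicallyReduced.singleton hj
  rwa [flatten_replicate_singleton] at this

theorem mk_conjWord : mk (conjWord v t) = mk v * of t * (mk v)⁻¹ := by
  rw [conjWord, inv_mk, of, mul_mk, mul_mk]
  simp

variable [DecidableEq α]

theorem IsReduced.toWord_mk (h : IsReduced L) : (mk L).toWord = L := by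
  rw [FreeGroup.toWord_mk, h.reduce_eq]

theorem toWord_inv_mk_append_mul_mk_append (hu : IsReduced (p ++ u)) (hv : IsReduced (p ++ v))
    (h : ∀ c ∈ u.head?, c ∉ v.head?) :
    ((mk (p ++ u))⁻¹ * mk (p ++ v)).toWord = invRev u ++ v := by
  have hmk : (mk (p ++ u))⁻¹ * mk (p ++ v) = mk (invRev u ++ v) := by
    rw [← mul_mk, ← mul_mk, ← mul_mk, ← inv_mk]
    group
  rw [hmk, (isReduced_invRev_append (hu.infix (suffix_append p u).isInfix)
    (hv.infix (suffix_append p v).isInfix) h).toWord_mk]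

theorem toWord_inv_mk_mul_mk_eq_nil_iff (hu : IsReduced u) (hv : IsReduced v) :
    ((mk u)⁻¹ * mk v).toWord = [] ↔ u = v := by
  rw [toWord_eq_nil_iff, inv_mul_eq_one]
  exact ⟨fun h => by rw [← hu.toWord_mk, h, hv.toWord_mk], congrArg mk⟩

theorem fst_ne_of_mem_head?_toWord_inv_mk_mul_mk {s : α} (hu : ∀ b, IsReduced (u ++ [(s, b)]))
    (hv : IsReduced v) (hsep : ∀ b, ¬u ++ [(s, b)] <+: v) :
    ∀ c ∈ ((mk u)⁻¹ * mk v).toWord.head?, c.1 ≠ s := by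
  obtain ⟨p, u', v', rfl, rfl, hd⟩ := exists_eq_append_append_of_head?_ne u v
  rw [toWord_inv_mk_append_mul_mk_append ((hu true).infix (prefix_append _ _).isInfix) hv hd]
  rintro ⟨s', b⟩ hc rfl
  rcases eq_or_ne u' [] with rfl | hu'
  · obtain ⟨v', rfl⟩ : ∃ v'', v' = (s', b) :: v'' := by
      cases v' <;> simp_all
    exact hsep b (by simp)
  · rw [head?_append_of_ne_nil _ (by simpa [FreeGroup.invRev] using hu')] at hc
    exact not_isReduced_append_of_head?_eq hu' (X := [(s', b)]) (by simpa using hc.symm)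
      ((hu b).infix (L₁ := u' ++ [(s', b)]) ⟨p, [], by simp⟩)

theorem isReduced_toWord_inv_mk_mul_mk_append {c : α × Bool} (hu : IsReduced u)
    (hv : IsReduced (v ++ [c])) (hsep : ¬v ++ [c] <+: u) :
    IsReduced (((mk u)⁻¹ * mk v).toWord ++ [c]) := by
  obtain ⟨p, u', v', rfl, rfl, hd⟩ := exists_eq_append_append_of_head?_ne u v
  rw [toWord_inv_mk_append_mul_mk_append hu (hv.infix (prefix_append _ _).isInfix) hd,
    append_assoc]
  refine isReduced_invRev_append (hu.infix (suffix_append _ _).isInfix)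
    (hv.infix (L₁ := v' ++ [c]) ⟨p, [], by simp⟩) fun d hdu hdv => ?_
  rcases eq_or_ne v' [] with rfl | hv'
  · obtain ⟨u', rfl⟩ : ∃ u'', u' = c :: u'' := by
      cases u' <;> simp_all
    exact hsep (by simp)
  · rw [head?_append_of_ne_nil _ hv'] at hdv
    exact hd d hdu hdv

theorem isReduced_append_of_toWord_eq_conjWord {x : FreeGroup α} (h : x.toWord = conjWord v t) :
    ∀ b, IsReduced (v ++ [(t, b)]) :=
  isReduced_conjWord_iff.1 (h ▸ isReduced_toWord)

theorem isReduced_of_toWord_eq_conjWord {x : FreeGroup α} (h : x.toWord = conjWord v t) :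
    IsReduced v :=
  (isReduced_append_of_toWord_eq_conjWord h true).infix (prefix_append _ _).isInfix

theorem toWord_of_eq_conjWord (i : α) : (of i).toWord = conjWord [] i :=
  toWord_of i

/-- `v ++ [(t, b)] <+: w` says that the path `w` in the Cayley tree runs through the edge leaving
`v` with label `t` or `t⁻¹`. -/
structure IsSeparated (S : Set (FreeGroup α)) : Prop where
  intro ::
  exists_toWord_eq_conjWord : ∀ x ∈ S, ∃ v t, x.toWord = conjWord v t
  not_prefix : ∀ x ∈ S, ∀ y ∈ S, ∀ v t w r, x.toWord = conjWord v t →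
    y.toWord = conjWord w r → ∀ b, ¬v ++ [(t, b)] <+: w

theorem isSeparated_range_of : IsSeparated (Set.range (of : α → FreeGroup α)) where
  exists_toWord_eq_conjWord := by
    rintro _ ⟨i, rfl⟩
    exact ⟨[], i, toWord_of_eq_conjWord i⟩
  not_prefix := by
    rintro _ ⟨i, rfl⟩ _ ⟨k, rfl⟩ v t w r hv hw b
    obtain ⟨rfl, -⟩ := conjWord_inj.1 (hv.symm.trans (toWord_of_eq_conjWord i))
    obtain ⟨rfl, -⟩ := conjWord_inj.1 (hw.symm.trans (toWord_of_eq_conjWord k))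
    simp

def powConjugator (u : List (α × Bool)) (s : α) (j : ℕ) (v : List (α × Bool)) :
    List (α × Bool) :=
  u ++ replicate j (s, true) ++ ((mk u)⁻¹ * mk v).toWord

section powConjugator

variable {a x : FreeGroup α} {s : α} {j : ℕ}

theorem conj_pow_eq_mk_conjWord_powConjugator (ha : a.toWord = conjWord u s)
    (hx : x.toWord = conjWord v t) :
    a ^ j * x * (a ^ j)⁻¹ = mk (conjWord (powConjugator u s j v) t) := by
  have hpow : mk (replicate j (s, true)) = of s ^ j := by
    rw [← toWord_of_pow, mk_toWord]
  rw [← mk_toWord (x := a), ha, ← mk_toWord (x := x), hx, mk_conjWord, mk_conjWord, mk_conjWord,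
    powConjugator, ← mul_mk, ← mul_mk, mk_toWord, hpow, conj_pow]
  group

theorem length_lt_length_powConjugator (hu : IsReduced u) (hv : IsReduced v) (hj : j ≠ 0) :
    v.length < (powConjugator u s j v).length := by
  have hle : v.length ≤ u.length + ((mk u)⁻¹ * mk v).toWord.length := by
    have := norm_mul_le (mk u) ((mk u)⁻¹ * mk v)
    rwa [mul_inv_cancel_left, norm, norm, hu.toWord_mk, hv.toWord_mk] at this
  simp only [powConjugator, length_append, length_replicate]
  omega

theorem prefix_powConjugator (hj : j ≠ 0) : u ++ [(s, true)] <+: powConjugator u s j v := by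
  obtain ⟨j, rfl⟩ := Nat.exists_eq_succ_of_ne_zero hj
  exact ⟨replicate j (s, true) ++ ((mk u)⁻¹ * mk v).toWord,
    by simp [powConjugator, replicate_succ]⟩

theorem not_prefix_powConjugator {b : Bool} (hj : j ≠ 0) (hvu : ¬(v = u ∧ t = s))
    (hvu' : ¬v ++ [(t, b)] <+: u) (huv : ¬u ++ [(s, true)] <+: v) :
    ¬v ++ [(t, b)] <+: powConjugator u s j w := by
  intro h
  rcases prefix_or_prefix_of_prefix h (prefix_powConjugator hj) with h' | h'
  · rcases prefix_concat_iff.1 h' with h' | h'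
    · obtain ⟨rfl, hc⟩ := append_inj' h' rfl
      exact hvu ⟨rfl, congrArg Prod.fst (singleton_inj.1 hc)⟩
    · exact hvu' h'
  · rcases prefix_concat_iff.1 h' with h' | h'
    · obtain ⟨rfl, hc⟩ := append_inj' h' rfl
      exact hvu ⟨rfl, congrArg Prod.fst (singleton_inj.1 hc).symm⟩
    · exact huv h'

end powConjugator

namespace IsSeparated

variable {S : Set (FreeGroup α)} {a x y : FreeGroup α} {s : α} {j k : ℕ}

theorem fst_ne_of_mem_head? (hS : IsSeparated S) (haS : a ∈ S) (hxS : x ∈ S) (hxa : x ≠ a)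
    (ha : a.toWord = conjWord u s) (hx : x.toWord = conjWord v t) (b : Bool) :
    ∀ d ∈ (((mk u)⁻¹ * mk v).toWord ++ [(t, b)]).head?, d.1 ≠ s := by
  have hu := isReduced_of_toWord_eq_conjWord ha
  have hv := isReduced_of_toWord_eq_conjWord hx
  rcases eq_or_ne ((mk u)⁻¹ * mk v).toWord [] with hZ | hZ
  · rintro d hd rfl
    rw [hZ, nil_append, head?_singleton, Option.mem_some_iff] at hd
    subst hd
    rw [toWord_inv_mk_mul_mk_eq_nil_iff hu hv] at hZ
    subst hZ
    exact hxa (toWord_injective (hx.trans ha.symm))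
  · rw [head?_append_of_ne_nil _ hZ]
    exact fst_ne_of_mem_head?_toWord_inv_mk_mul_mk (isReduced_append_of_toWord_eq_conjWord ha) hv
      (hS.not_prefix a haS x hxS u s v t ha hx)

theorem toWord_conj_pow (hS : IsSeparated S) (haS : a ∈ S) (hxS : x ∈ S) (hxa : x ≠ a)
    (ha : a.toWord = conjWord u s) (hx : x.toWord = conjWord v t) (hj : j ≠ 0) :
    (a ^ j * x * (a ^ j)⁻¹).toWord = conjWord (powConjugator u s j v) t := by
  rw [conj_pow_eq_mk_conjWord_powConjugator ha hx, IsReduced.toWord_mk]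
  refine isReduced_conjWord_iff.2 fun b => ?_
  rw [powConjugator, append_assoc _ _ [(t, b)]]
  exact isReduced_append_replicate_append hj (isReduced_append_of_toWord_eq_conjWord ha true)
    (isReduced_toWord_inv_mk_mul_mk_append (isReduced_of_toWord_eq_conjWord ha)
      (isReduced_append_of_toWord_eq_conjWord hx b) (hS.not_prefix x hxS a haS v t u s hx ha b))
    (hS.fst_ne_of_mem_head? haS hxS hxa ha hx b)

theorem not_powConjugator_prefix_powConjugator (hS : IsSeparated S) (haS : a ∈ S) (hxS : x ∈ S)
    (hyS : y ∈ S) (hxa : x ≠ a) (ha : a.toWord = conjWord u s) (hx : x.toWord = conjWord v t)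
    (hy : y.toWord = conjWord w r) (b : Bool) :
    ¬powConjugator u s j v ++ [(t, b)] <+: powConjugator u s k w := by
  intro h
  simp only [powConjugator, append_assoc, prefix_append_right_inj] at h
  rcases lt_trichotomy j k with hjk | rfl | hjk
  · obtain ⟨m, rfl⟩ : ∃ m, k = j + (m + 1) := ⟨k - j - 1, by omega⟩
    rw [replicate_add, append_assoc, prefix_append_right_inj, replicate_succ, cons_append] at h
    exact hS.fst_ne_of_mem_head? haS hxS hxa ha hx b (s, true)
      (by rw [h.head?_eq (by simp)]; rfl) rfl
  · rw [prefix_append_right_inj] at h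
    have hu := isReduced_of_toWord_eq_conjWord ha
    have hv := isReduced_append_of_toWord_eq_conjWord hx b
    have hw := isReduced_of_toWord_eq_conjWord hy
    obtain ⟨p, u₁, v₁, hpu, rfl, hd⟩ := exists_eq_append_append_of_head?_ne u v
    obtain ⟨q, u₂, w₁, hqu, rfl, hd'⟩ := exists_eq_append_append_of_head?_ne u w
    rw [hpu, toWord_inv_mk_append_mul_mk_append (hpu ▸ hu) (hv.infix (prefix_append _ _).isInfix)
      hd, ← hpu, hqu, toWord_inv_mk_append_mul_mk_append (hqu ▸ hu) hw hd', append_assoc] at h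
    refine hS.not_prefix x hxS y hyS _ t _ r hx hy b ?_
    rw [append_assoc]
    exact prefix_append_of_invRev_append_prefix (hpu.symm.trans hqu) (by rwa [← append_assoc])
      (by simp) hw h
  · obtain ⟨m, rfl⟩ : ∃ m, j = k + (m + 1) := ⟨j - k - 1, by omega⟩
    rw [replicate_add, append_assoc, prefix_append_right_inj, replicate_succ, cons_append] at h
    exact fst_ne_of_mem_head?_toWord_inv_mk_mul_mk (isReduced_append_of_toWord_eq_conjWord ha)
      (isReduced_of_toWord_eq_conjWord hy) (hS.not_prefix a haS y hyS u s w r ha hy) (s, true)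
      (by rw [← h.head?_eq (by simp)]; rfl) rfl

theorem cases_of_mem_conjPowers (hS : IsSeparated S) (haS : a ∈ S)
    (ha : a.toWord = conjWord u s) {g : FreeGroup α} (hg : g ∈ conjPowers S a) :
    g ∈ S \ {a} ∨ ∃ x ∈ S, x ≠ a ∧ ∃ v t, x.toWord = conjWord v t ∧
      ∃ j ≠ 0, g.toWord = conjWord (powConjugator u s j v) t := by
  obtain ⟨x, hxS, hxa, j, rfl⟩ := hg
  rcases eq_or_ne j 0 with rfl | hj
  · left
    simpa using ⟨hxS, hxa⟩
  · obtain ⟨v, t, hx⟩ := hS.exists_toWord_eq_conjWord x hxS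
    exact Or.inr ⟨x, hxS, hxa, v, t, hx, j, hj, hS.toWord_conj_pow haS hxS hxa ha hx hj⟩

theorem conjPowers_of_mem (hS : IsSeparated S) (haS : a ∈ S) : IsSeparated (conjPowers S a) := by
  obtain ⟨u, s, ha⟩ := hS.exists_toWord_eq_conjWord a haS
  refine ⟨fun g hg => ?_, fun g hg h hh V T W R hV hW b => ?_⟩
  · rcases hS.cases_of_mem_conjPowers haS ha hg with
      ⟨hgS, -⟩ | ⟨-, -, -, _, _, -, _, -, hg⟩
    · exact hS.exists_toWord_eq_conjWord g hgS
    · exact ⟨_, _, hg⟩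
  rcases hS.cases_of_mem_conjPowers haS ha hg with
    ⟨hgS, hga⟩ | ⟨x, hxS, hxa, v, t, hx, j, hj, hg⟩ <;>
  rcases hS.cases_of_mem_conjPowers haS ha hh with
    ⟨hhS, -⟩ | ⟨y, hyS, -, w, r, hy, k, hk, hh⟩
  · exact hS.not_prefix g hgS h hhS V T W R hV hW b
  · obtain ⟨rfl, rfl⟩ := conjWord_inj.1 (hW.symm.trans hh)
    refine not_prefix_powConjugator hk (fun ⟨hVu, hTs⟩ => hga ?_)
      (hS.not_prefix g hgS a haS V T u s hV ha b) (hS.not_prefix a haS g hgS u s V T ha hV true)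
    exact toWord_injective (by rw [hV, ha, hVu, hTs])
  · obtain ⟨rfl, rfl⟩ := conjWord_inj.1 (hV.symm.trans hg)
    exact fun hpre => hS.not_prefix a haS h hhS u s W R ha hW true
      ((prefix_powConjugator hj).trans ((prefix_append _ _).trans hpre))
  · obtain ⟨rfl, rfl⟩ := conjWord_inj.1 (hV.symm.trans hg)
    obtain ⟨rfl, rfl⟩ := conjWord_inj.1 (hW.symm.trans hh)
    exact hS.not_powConjugator_prefix_powConjugator haS hxS hyS hxa ha hx hy b

theorem exists_norm_lt_of_mem_conjPowers (hS : IsSeparated S) (haS : a ∈ S) {g : FreeGroup α}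
    (hg : g ∈ conjPowers S a) : g ∈ S \ {a} ∨ ∃ x ∈ S, x.norm < g.norm := by
  obtain ⟨u, s, ha⟩ := hS.exists_toWord_eq_conjWord a haS
  rcases hS.cases_of_mem_conjPowers haS ha hg with hgS | ⟨x, hxS, -, v, t, hx, j, hj, hg⟩
  · exact Or.inl hgS
  · refine Or.inr ⟨x, hxS, ?_⟩
    have := length_lt_length_powConjugator (s := s) (isReduced_of_toWord_eq_conjWord ha)
      (isReduced_of_toWord_eq_conjWord hx) hj
    rw [norm, norm, hx, hg, length_conjWord, length_conjWord]
    omega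

end IsSeparated

theorem finite_setOf_norm_le [Finite α] (n : ℕ) : {x : FreeGroup α | x.norm ≤ n}.Finite :=
  (List.finite_length_le _ n).preimage toWord_injective.injOn

end FreeGroup

section Exhaustion

variable {β : Type*} {f : β → ℕ} {S : ℕ → Set β} {a : ℕ → β}

theorem monotone_apply_of_step (ha : ∀ i, a i ∈ S i)
    (hmin : ∀ i, ∀ x ∈ S i, f (a i) ≤ f x)
    (hstep : ∀ i, ∀ g ∈ S (i + 1), g ∈ S i \ {a i} ∨ ∃ x ∈ S i, f x < f g) :
    Monotone fun i => f (a i) := by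
  refine monotone_nat_of_le_succ fun i => ?_
  rcases hstep i _ (ha (i + 1)) with ⟨h, -⟩ | ⟨x, hx, hlt⟩
  · exact hmin i _ h
  · exact (hmin i x hx).trans hlt.le

theorem exists_apply_lt_of_step (hf : ∀ n, {x | f x ≤ n}.Finite) (ha : ∀ i, a i ∈ S i)
    (hmin : ∀ i, ∀ x ∈ S i, f (a i) ≤ f x)
    (hstep : ∀ i, ∀ g ∈ S (i + 1), g ∈ S i \ {a i} ∨ ∃ x ∈ S i, f x < f g) (i : ℕ) :
    ∃ m, f (a i) < f (a m) := by
  by_contra! hle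
  have hmono := monotone_apply_of_step ha hmin hstep
  set B : ℕ → Set β := fun k => {x | x ∈ S (i + k) ∧ f x ≤ f (a i)}
  have hssub : ∀ k, B (k + 1) ⊂ B k := fun k => by
    have hsub : B (k + 1) ⊆ B k \ {a (i + k)} := by
      rintro g ⟨hg, hgle⟩
      rcases hstep (i + k) g hg with hg' | ⟨x, hx, hlt⟩
      · exact ⟨⟨hg'.1, hgle⟩, hg'.2⟩
      · have h₁ : f (a i) ≤ f (a (i + k)) := hmono (Nat.le_add_right i k)
        have h₂ := hmin _ x hx
        omega
    exact hsub.trans_ssubset (Set.sdiff_singleton_ssubset.2 ⟨ha _, hle _⟩)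
  obtain ⟨k, hk⟩ := WellFounded.not_rel_apply_succ (r := (· < ·)) fun k => (B k).ncard
  exact hk (Set.ncard_lt_ncard (hssub k) ((hf _).subset fun x hx => hx.2))

theorem exists_forall_le_of_step (hf : ∀ n, {x | f x ≤ n}.Finite) (ha : ∀ i, a i ∈ S i)
    (hmin : ∀ i, ∀ x ∈ S i, f (a i) ≤ f x)
    (hstep : ∀ i, ∀ g ∈ S (i + 1), g ∈ S i \ {a i} ∨ ∃ x ∈ S i, f x < f g) (r : ℕ) :
    ∃ m, 0 < m ∧ ∀ x ∈ S m, r ≤ f x := by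
  have hunbounded : ∀ r, ∃ m, r ≤ f (a m) := by
    intro r
    induction r with
    | zero => exact ⟨0, Nat.zero_le _⟩
    | succ r ih =>
      obtain ⟨m, hm⟩ := ih
      obtain ⟨m', hm'⟩ := exists_apply_lt_of_step hf ha hmin hstep m
      exact ⟨m', by omega⟩
  obtain ⟨m, hm⟩ := hunbounded r
  exact ⟨m + 1, m.succ_pos, fun x hx =>
    hm.trans ((monotone_apply_of_step ha hmin hstep m.le_succ).trans (hmin _ x hx))⟩

end Exhaustion

/-- Let `G` be a free group on a finite set `S₀`, and define the chain
of free generating sets `S i` by: `a i ∈ S i` is a chosen element of smallest reduced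
word length, and `S (i+1) = {(a i)^j * x * (a i)^{-j} : x ∈ S i \ {a i}, j ≥ 0}` (a free
generating set for the normal closure of `S i \ {a i}`).  Then for every positive `r`
there is a positive `m` such that `S m` contains no element of word length smaller than
`r`. -/
theorem min_length_of_generating_sets_tendsto_infinity
    (ι : Type*) [Finite ι] [DecidableEq ι]
    (S : ℕ → Set (FreeGroup ι)) (a : ℕ → FreeGroup ι)
    (hS0 : S 0 = Set.range FreeGroup.of)
    (ha : ∀ i, a i ∈ S i)
    (hmin : ∀ i, ∀ x ∈ S i, FreeGroup.norm (a i) ≤ FreeGroup.norm x)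
    (hSsucc : ∀ i, S (i + 1) =
      {g | ∃ x ∈ S i, x ≠ a i ∧ ∃ j : ℕ, g = (a i) ^ j * x * ((a i) ^ j)⁻¹}) :
    ∀ r : ℕ, 0 < r → ∃ m : ℕ, 0 < m ∧ ∀ x ∈ S m, r ≤ FreeGroup.norm x := by
  have hsucc : ∀ i, S (i + 1) = conjPowers (S i) (a i) := hSsucc
  have hsep : ∀ i, FreeGroup.IsSeparated (S i) := fun i => by
    induction i with
    | zero => exact hS0 ▸ FreeGroup.isSeparated_range_of
    | succ i ih => exact hsucc i ▸ ih.conjPowers_of_mem (ha i)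
  exact fun r _ => exists_forall_le_of_step FreeGroup.finite_setOf_norm_le ha hmin
    (fun i g hg => (hsep i).exists_norm_lt_of_mem_conjPowers (ha i) (hsucc i ▸ hg)) r
end
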